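/- Let 𝒳 and 𝒜 be finite sets of vectors in ℝᵈ, X ⊊ 𝒳 and A ⊊ 𝒜 nonempty proper subsets, X^c = 𝒳 \ X, A^c = 𝒜 \ A. With g(X,A) = (X̄ − 𝒳̄)·(Ā − 𝒜̄) and two-group g(X₁,A₁,X₂,A₂) = (X̄₁ − μ)·(Ā₁ − 𝒜̄) + (X̄₂ − μ)·(Ā₂ − 𝒜̄) where μ = (X̄₁ + X̄₂)/2, one has g(X,A) = 2·(|X^c|/|𝒳|)·(|A^c|/|𝒜|)·g(X,A,X^c,A^c). -/

import Mathlib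

open Finset

noncomputable def wmean {d : ℕ} (S : Finset (EuclideanSpace ℝ (Fin d))) :
    EuclideanSpace ℝ (Fin d) :=
  (S.card : ℝ)⁻¹ • ∑ v ∈ S, v

noncomputable def dot {d : ℕ} (x y : EuclideanSpace ℝ (Fin d)) : ℝ := inner ℝ x y

/-!
Both sides are multiples of `⟪X̄ - X̄ᶜ, Ā - Āᶜ⟫`. Since `𝒳̄` is the convex combination of `X̄` and
`X̄ᶜ` with weights `|X|/|𝒳|` and `|Xᶜ|/|𝒳|`, one has `X̄ - 𝒳̄ = (|Xᶜ|/|𝒳|) • (X̄ - X̄ᶜ)`, and likewise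
for `A`. On the other side, `X̄ - μ = -(X̄ᶜ - μ) = (X̄ - X̄ᶜ)/2`, so the two-group statistic
collapses to `½ ⟪X̄ - X̄ᶜ, Ā - Āᶜ⟫`.
-/

section MeanSplit

variable {ι K E : Type*} [DecidableEq ι] [Field K] [CharZero K] [AddCommGroup E] [Module K E]

theorem inv_card_smul_sum_sub_inv_card_smul_sum_of_subset {s t : Finset ι} (f : ι → E)
    (hst : s ⊆ t) :
    (#s : K)⁻¹ • ∑ i ∈ s, f i - (#t : K)⁻¹ • ∑ i ∈ t, f i =
      ((#(t \ s) : K) / #t) •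
        ((#s : K)⁻¹ • ∑ i ∈ s, f i - (#(t \ s) : K)⁻¹ • ∑ i ∈ t \ s, f i) := by
  obtain rfl | hs := s.eq_empty_or_nonempty
  · obtain rfl | ht := t.eq_empty_or_nonempty
    · simp
    · have ht' : (#t : K) ≠ 0 := by simp [ht.ne_empty]
      simp [smul_smul, ht']
  obtain hc | hc := (t \ s).eq_empty_or_nonempty
  · simp [subset_antisymm hst (sdiff_eq_empty_iff_subset.mp hc)]
  rw [← sum_sdiff hst, ← card_sdiff_add_card_eq_card hst]
  have hs' : (#s : K) ≠ 0 := by simp [hs.ne_empty]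
  have hc' : (#(t \ s) : K) ≠ 0 := by simp [hc.ne_empty]
  have hsc : ((#(t \ s) + #s : ℕ) : K) ≠ 0 := Nat.cast_ne_zero.mpr (by simp [hs.ne_empty])
  push_cast at hsc ⊢
  match_scalars <;> field_simp
  ring

end MeanSplit

theorem wmean_sub_wmean_of_subset {d : ℕ} [DecidableEq (EuclideanSpace ℝ (Fin d))]
    {X 𝒳 : Finset (EuclideanSpace ℝ (Fin d))} (h : X ⊆ 𝒳) :
    wmean X - wmean 𝒳 = ((#(𝒳 \ X) : ℝ) / #𝒳) • (wmean X - wmean (𝒳 \ X)) :=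
  inv_card_smul_sum_sub_inv_card_smul_sum_of_subset id h

theorem inner_sub_midpoint_add_inner_sub_midpoint {E : Type*} [NormedAddCommGroup E]
    [InnerProductSpace ℝ E] (x₁ x₂ b₁ b₂ : E) :
    inner ℝ (x₁ - (1 / 2 : ℝ) • (x₁ + x₂)) b₁ + inner ℝ (x₂ - (1 / 2 : ℝ) • (x₁ + x₂)) b₂ =
      (1 / 2 : ℝ) * inner ℝ (x₁ - x₂) (b₁ - b₂) := by
  have h₁ : x₁ - (1 / 2 : ℝ) • (x₁ + x₂) = (1 / 2 : ℝ) • (x₁ - x₂) := by module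
  have h₂ : x₂ - (1 / 2 : ℝ) • (x₁ + x₂) = -((1 / 2 : ℝ) • (x₁ - x₂)) := by module
  rw [h₁, h₂, inner_neg_left, ← sub_eq_add_neg, ← inner_sub_right, real_inner_smul_left]

theorem stmt_4_general {d : ℕ} [DecidableEq (EuclideanSpace ℝ (Fin d))] (𝒳 𝒜 : Finset (EuclideanSpace ℝ (Fin d)))
    (X A : Finset (EuclideanSpace ℝ (Fin d)))
    (hXsub : X ⊂ 𝒳) (hAsub : A ⊂ 𝒜) :
    dot (wmean X - wmean 𝒳) (wmean A - wmean 𝒜) =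
      2 * (((𝒳 \ X).card : ℝ) / (𝒳.card : ℝ)) * (((𝒜 \ A).card : ℝ) / (𝒜.card : ℝ)) *
        (dot (wmean X - (1 / 2 : ℝ) • (wmean X + wmean (𝒳 \ X))) (wmean A - wmean 𝒜) +
          dot (wmean (𝒳 \ X) - (1 / 2 : ℝ) • (wmean X + wmean (𝒳 \ X)))
            (wmean (𝒜 \ A) - wmean 𝒜)) := by
  unfold dot
  rw [inner_sub_midpoint_add_inner_sub_midpoint, sub_sub_sub_cancel_right,
    wmean_sub_wmean_of_subset hXsub.subset, wmean_sub_wmean_of_subset hAsub.subset,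
    real_inner_smul_left, real_inner_smul_right]
  ring

theorem stmt_4 {d : ℕ} [DecidableEq (EuclideanSpace ℝ (Fin d))] (𝒳 𝒜 : Finset (EuclideanSpace ℝ (Fin d)))
    (X A : Finset (EuclideanSpace ℝ (Fin d)))
    (hX : X.Nonempty) (hXsub : X ⊂ 𝒳) (hA : A.Nonempty) (hAsub : A ⊂ 𝒜) :
    dot (wmean X - wmean 𝒳) (wmean A - wmean 𝒜) =
      2 * (((𝒳 \ X).card : ℝ) / (𝒳.card : ℝ)) * (((𝒜 \ A).card : ℝ) / (𝒜.card : ℝ)) *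
        (dot (wmean X - (1 / 2 : ℝ) • (wmean X + wmean (𝒳 \ X))) (wmean A - wmean 𝒜) +
          dot (wmean (𝒳 \ X) - (1 / 2 : ℝ) • (wmean X + wmean (𝒳 \ X)))
            (wmean (𝒜 \ A) - wmean 𝒜)) :=
  stmt_4_general 𝒳 𝒜 X A hXsub hAsub
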